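/- arXiv:2203.12174 — 5 statements merged into one kernel-verified Lean document; each statement's English description precedes it below -/
import Mathlib

section
/- In a post-Hopf algebra (H, ▷), the antipode is natural with respect to ▷: for all x, y in H, S(x ▷ y) = x ▷ S(y). -/
/-!
Post-Hopf algebras (Li–Sheng–Tang). We work over a commutative ring `R`.
`Coalgebra.comul (A := H ⊗[R] H)` refers to the standard coalgebra structure
on the tensor product, so that `comul_rhd`/`counit_rhd` say exactly that
`▷ : H ⊗ H → H` is a coalgebra homomorphism.  Sweedler sums such as
`(x₁ ▷ y)·(x₂ ▷ z)` are expressed by applying suitable linear maps to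
`Coalgebra.comul x`.
-/

open TensorProduct Coalgebra LinearMap HopfAlgebra

variable (R H : Type*) [CommRing R] [Ring H] [HopfAlgebra R H]

/-- The subadjacent product `x *▷ y = x₁ · (x₂ ▷ y)` as a linear map
`H ⊗ H → H`, built from a binary operation `rhd : H ⊗ H →ₗ H`. -/
noncomputable def subProd (rhd : H ⊗[R] H →ₗ[R] H) : H ⊗[R] H →ₗ[R] H :=
  LinearMap.mul' R H ∘ₗ TensorProduct.map LinearMap.id rhd
    ∘ₗ (TensorProduct.assoc R H H H).toLinearMap
    ∘ₗ TensorProduct.map Coalgebra.comul LinearMap.id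

/-- Convolution product on `Hom(H, End(H))`: `(f * g)(x) = f(x₁) ∘ g(x₂)`. -/
noncomputable def convEnd (f g : H →ₗ[R] Module.End R H) : H →ₗ[R] Module.End R H :=
  LinearMap.mul' R (Module.End R H) ∘ₗ TensorProduct.map f g ∘ₗ Coalgebra.comul

/-- The unit `x ↦ ε(x)·id` of the convolution algebra `Hom(H, End(H))`. -/
noncomputable def convUnit : H →ₗ[R] Module.End R H :=
  Algebra.linearMap R (Module.End R H) ∘ₗ Coalgebra.counit

/-- A post-Hopf algebra structure on the Hopf algebra `H`: a coalgebra
homomorphism `▷ : H ⊗ H → H` satisfying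
`x ▷ (y·z) = (x₁ ▷ y)·(x₂ ▷ z)`, `x ▷ (y ▷ z) = (x₁·(x₂ ▷ y)) ▷ z`, and
such that `α : H → End H`, `α_x = x ▷ -`, is convolution invertible. -/
structure PostHopf : Type _ where
  /-- the binary operation `▷` -/
  rhd : H ⊗[R] H →ₗ[R] H
  /-- `▷` is comultiplicative -/
  comul_rhd : Coalgebra.comul ∘ₗ rhd
      = TensorProduct.map rhd rhd ∘ₗ (Coalgebra.comul (R := R) (A := H ⊗[R] H))
  /-- `▷` is counital -/
  counit_rhd : Coalgebra.counit ∘ₗ rhd = (Coalgebra.counit (R := R) (A := H ⊗[R] H))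
  /-- `x ▷ (y·z) = (x₁ ▷ y)·(x₂ ▷ z)` -/
  rhd_mul : ∀ x y z : H,
    rhd (x ⊗ₜ (y * z))
      = LinearMap.mul' R H
          (TensorProduct.map (rhd ∘ₗ (TensorProduct.mk R H H).flip y)
            (rhd ∘ₗ (TensorProduct.mk R H H).flip z) (Coalgebra.comul x))
  /-- `x ▷ (y ▷ z) = (x₁·(x₂ ▷ y)) ▷ z` -/
  rhd_rhd : ∀ x y z : H,
    rhd (x ⊗ₜ rhd (y ⊗ₜ z)) = rhd (subProd R H rhd (x ⊗ₜ y) ⊗ₜ z)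
  /-- `α : x ↦ (x ▷ -)` is convolution invertible in `Hom(H, End H)` -/
  conv_invertible : ∃ β : H →ₗ[R] Module.End R H,
    convEnd R H ((TensorProduct.mk R H H).compr₂ rhd) β = convUnit R H ∧
    convEnd R H β ((TensorProduct.mk R H H).compr₂ rhd) = convUnit R H

/-- Cocommutativity of the coalgebra `H`. -/
def IsCocomm : Prop :=
  ∀ x : H, (TensorProduct.comm R H H) (Coalgebra.comul x) = Coalgebra.comul x

/-- The subadjacent antipode `S▷(x) = β_{x₁}(S(x₂))`, built from a
convolution inverse `β` of the left multiplication. -/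
noncomputable def subAntipode (β : H →ₗ[R] Module.End R H) : H →ₗ[R] H :=
  TensorProduct.lift (β.compl₂ (HopfAlgebra.antipode (R := R) (A := H)))
    ∘ₗ Coalgebra.comul

/-- An element is primitive if `Δ(x) = 1 ⊗ x + x ⊗ 1`. -/
def IsPrimitive (x : H) : Prop :=
  Coalgebra.comul (R := R) x = (1 : H) ⊗ₜ x + x ⊗ₜ (1 : H)

/-!
In the convolution monoid of linear maps `H ⊗ H → H`, the map `S ∘ ▷` is a left inverse of `▷`
because `▷` is a coalgebra map, while `▷ ∘ (id ⊗ S)` is a right inverse by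
`x ▷ (y·z) = (x₁ ▷ y)·(x₂ ▷ z)` and `x ▷ 1 = ε(x)·1`; hence the two agree.
The identity `x ▷ 1 = ε(x)·1` holds because `x ↦ x ▷ 1` is a coalgebra map, hence convolution
invertible, and it is convolution idempotent since `1 = 1·1`.
-/

open WithConv

namespace CoalgHom

variable {R} {B C : Type*} [AddCommGroup B] [Module R B] [Coalgebra R B]
  [AddCommGroup C] [Module R C] [Coalgebra R C]

lemma convOne_comp {A : Type*} [Semiring A] [Algebra R A] (f : B →ₗc[R] C) :
    (1 : WithConv (C →ₗ[R] A)).ofConv ∘ₗ (f : B →ₗ[R] C) = (1 : WithConv (B →ₗ[R] A)).ofConv := by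
  simp [LinearMap.convOne_def, LinearMap.comp_assoc]

variable {H}

lemma antipode_comp_convMul_self (f : C →ₗc[R] H) :
    toConv (antipode R ∘ₗ (f : C →ₗ[R] H)) * toConv (f : C →ₗ[R] H) = 1 := by
  apply WithConv.ofConv_injective
  have h := LinearMap.convMul_comp_coalgHom_distrib (toConv (antipode R)) (toConv LinearMap.id) f
  simp only [LinearMap.antipode_mul_id, LinearMap.id_comp] at h
  exact h.symm.trans (convOne_comp f)

lemma convMul_antipode_comp_self (f : C →ₗc[R] H) :
    toConv (f : C →ₗ[R] H) * toConv (antipode R ∘ₗ (f : C →ₗ[R] H)) = 1 := by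
  apply WithConv.ofConv_injective
  have h := LinearMap.convMul_comp_coalgHom_distrib (toConv LinearMap.id) (toConv (antipode R)) f
  simp only [LinearMap.id_mul_antipode, LinearMap.id_comp] at h
  exact h.symm.trans (convOne_comp f)

lemma toConv_eq_one_of_isIdempotentElem (f : C →ₗc[R] H)
    (hf : IsIdempotentElem (toConv (f : C →ₗ[R] H))) : toConv (f : C →ₗ[R] H) = 1 :=
  (IsIdempotentElem.iff_eq_one_of_isUnit
    ⟨⟨_, _, convMul_antipode_comp_self f, antipode_comp_convMul_self f⟩, rfl⟩).mp hf

end CoalgHom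

namespace PostHopf

variable {R H} (P : PostHopf R H)

noncomputable def rhdCoalgHom : H ⊗[R] H →ₗc[R] H where
  toLinearMap := P.rhd
  counit_comp := P.counit_rhd
  map_comp_comul := P.comul_rhd.symm

noncomputable def rhdOne : H →ₗc[R] H :=
  P.rhdCoalgHom.comp <|
    (Coalgebra.TensorProduct.map (CoalgHom.id R H) (Bialgebra.unitBialgHom R H : R →ₗc[R] H)).comp
      (Coalgebra.TensorProduct.rid R R H).symm.toCoalgHom

lemma rhdOne_apply (x : H) : P.rhdOne x = P.rhd (x ⊗ₜ 1) := by
  simp [rhdOne, rhdCoalgHom]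

lemma rhd_tmul_mul_of_repr {x : H} {ι : Type*} (r : Coalgebra.Repr R x ι) (u v : H) :
    P.rhd (x ⊗ₜ (u * v)) = ∑ i ∈ r.index, P.rhd (r.left i ⊗ₜ u) * P.rhd (r.right i ⊗ₜ v) := by
  rw [P.rhd_mul x u v, ← r.eq]
  simp

lemma rhd_tmul_one (x : H) : P.rhd (x ⊗ₜ 1) = algebraMap R H (counit x) := by
  have hidem : IsIdempotentElem (toConv (P.rhdOne : H →ₗ[R] H)) := by
    ext y
    rw [(ℛ R y).convMul_apply]
    simp only [CoalgHom.coe_toLinearMap, rhdOne_apply]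
    rw [← rhd_tmul_mul_of_repr, mul_one]
  simpa [rhdOne_apply] using congr($(CoalgHom.toConv_eq_one_of_isIdempotentElem _ hidem) x)

lemma rhd_convMul_rhd_comp_lTensor_antipode :
    toConv P.rhd * toConv (P.rhd ∘ₗ (antipode R).lTensor H) = 1 := by
  refine WithConv.ext (TensorProduct.ext' fun a b => ?_)
  rw [((ℛ R a).tmul (ℛ R b)).convMul_apply, Coalgebra.Repr.tmul_index, Finset.sum_product_right]
  simp only [Coalgebra.Repr.tmul_left, Coalgebra.Repr.tmul_right, LinearMap.comp_apply,
    LinearMap.lTensor_tmul, ← rhd_tmul_mul_of_repr, ← map_sum, ← tmul_sum,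
    sum_mul_antipode_eq_algebraMap_counit]
  rw [Algebra.algebraMap_eq_smul_one, tmul_smul, map_smul, rhd_tmul_one, LinearMap.convOne_apply,
    TensorProduct.counit_tmul, smul_eq_mul, map_mul, Algebra.smul_def]

end PostHopf

/-- In a post-Hopf algebra `(H, ▷)`, the antipode satisfies
`S(x ▷ y) = x ▷ S(y)`. -/
theorem antipode_rhd (P : PostHopf R H) (x y : H) :
    HopfAlgebra.antipode (R := R) (A := H) (P.rhd (x ⊗ₜ y))
      = P.rhd (x ⊗ₜ HopfAlgebra.antipode (R := R) (A := H) y) := by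
  have hleft : toConv (antipode R ∘ₗ P.rhd) * toConv P.rhd = 1 :=
    CoalgHom.antipode_comp_convMul_self P.rhdCoalgHom
  have hS := left_inv_eq_right_inv hleft P.rhd_convMul_rhd_comp_lTensor_antipode
  exact congr($hS (x ⊗ₜ y))
end

section
/- Let (H, ▷) be a cocommutative post-Hopf algebra. Then the subadjacent product x *▷ y := x₁·(x₂ ▷ y) is associative. -/
/-!
Post-Hopf algebras (Li–Sheng–Tang). We work over a commutative ring `R`.
`Coalgebra.comul (A := H ⊗[R] H)` refers to the standard coalgebra structure
on the tensor product, so that `comul_rhd`/`counit_rhd` say exactly that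
`▷ : H ⊗ H → H` is a coalgebra homomorphism.  Sweedler sums such as
`(x₁ ▷ y)·(x₂ ▷ z)` are expressed by applying suitable linear maps to
`Coalgebra.comul x`.
-/

open TensorProduct Coalgebra LinearMap HopfAlgebra

variable (R H : Type*) [CommRing R] [Ring H] [HopfAlgebra R H]

/-!
For cocommutative `H` the comultiplication is a coalgebra morphism, hence so is `*▷`:
`Δ(x *▷ y) = (x₁ *▷ y₁) ⊗ (x₂ *▷ y₂)`. Therefore
`(x *▷ y) *▷ z = (x₁ *▷ y₁)·((x₂ *▷ y₂) ▷ z) = (x₁ *▷ y₁)·(x₂ ▷ (y₂ ▷ z))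
  = x *▷ (y₁·(y₂ ▷ z)) = x *▷ (y *▷ z)`,
where the third step is the identity `x *▷ (a·b) = (x₁ *▷ a)·(x₂ ▷ b)`, valid in every
post-Hopf algebra.
-/

section PostHopf

variable {R H}

noncomputable def PostHopf.rhdCoalgHom_s3 (P : PostHopf R H) : H ⊗[R] H →ₗc[R] H where
  toLinearMap := P.rhd
  counit_comp := P.counit_rhd
  map_comp_comul := P.comul_rhd.symm

theorem subProd_tmul_eq_sum (rhd : H ⊗[R] H →ₗ[R] H) {a : H} {ι : Type*}
    (ρ : Coalgebra.Repr R a ι) (b : H) :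
    subProd R H rhd (a ⊗ₜ b) = ∑ i ∈ ρ.index, ρ.left i * rhd (ρ.right i ⊗ₜ b) := by
  simp [subProd, ← ρ.eq, TensorProduct.sum_tmul]

theorem PostHopf.rhd_tmul_mul_eq_sum (P : PostHopf R H) {a : H} {ι : Type*}
    (ρ : Coalgebra.Repr R a ι) (u w : H) :
    P.rhd (a ⊗ₜ (u * w)) = ∑ i ∈ ρ.index, P.rhd (ρ.left i ⊗ₜ u) * P.rhd (ρ.right i ⊗ₜ w) := by
  simp [P.rhd_mul, ← ρ.eq]

/-- Expand `x₂ ▷ (a·b)` by `rhd_mul`, then regroup `x₁ ⊗ x₂ ⊗ x₃` by coassociativity. -/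
theorem PostHopf.subProd_tmul_mul_eq_sum (P : PostHopf R H) {x : H} {ι : Type*}
    (ρ : Coalgebra.Repr R x ι) (a b : H) :
    subProd R H P.rhd (x ⊗ₜ (a * b))
      = ∑ i ∈ ρ.index, subProd R H P.rhd (ρ.left i ⊗ₜ a) * P.rhd (ρ.right i ⊗ₜ b) := by
  let sweedlerEval : H ⊗[R] (H ⊗[R] H) →ₗ[R] H :=
    LinearMap.mul' R H ∘ₗ TensorProduct.map LinearMap.id
      (LinearMap.mul' R H ∘ₗ TensorProduct.map (P.rhd ∘ₗ (TensorProduct.mk R H H).flip a)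
        (P.rhd ∘ₗ (TensorProduct.mk R H H).flip b))
  have hcoassoc := congrArg sweedlerEval <|
    Coalgebra.sum_tmul_tmul_eq ρ (fun i => ℛ R (ρ.left i)) (fun i => ℛ R (ρ.right i))
  simp only [sweedlerEval, map_sum, LinearMap.comp_apply, TensorProduct.map_tmul,
    LinearMap.id_apply, LinearMap.mul'_apply, TensorProduct.mk_apply, LinearMap.flip_apply]
    at hcoassoc
  simp only [subProd_tmul_eq_sum _ ρ, subProd_tmul_eq_sum _ (ℛ R (ρ.left _)),
    P.rhd_tmul_mul_eq_sum (ℛ R (ρ.right _)), Finset.mul_sum, Finset.sum_mul, mul_assoc]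
  exact hcoassoc.symm

end PostHopf

section Cocomm

variable {R H} [Coalgebra.IsCocomm R H]

noncomputable def PostHopf.subProdCoalgHom (P : PostHopf R H) : H ⊗[R] H →ₗc[R] H :=
  (Bialgebra.mulCoalgHom R H).comp <| (CoalgHom.lTensor H P.rhdCoalgHom_s3).comp <|
    (Coalgebra.TensorProduct.assoc R R H H H : (H ⊗[R] H) ⊗[R] H →ₗc[R] H ⊗[R] (H ⊗[R] H)).comp
      (CoalgHom.rTensor H (Coalgebra.comulCoalgHom R H))

theorem PostHopf.coe_subProdCoalgHom (P : PostHopf R H) :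
    ⇑P.subProdCoalgHom = subProd R H P.rhd := by
  refine congrArg DFunLike.coe (?_ : (P.subProdCoalgHom : H ⊗[R] H →ₗ[R] H) = _)
  ext a b
  rfl

theorem PostHopf.subProd_subProd_tmul_eq_sum (P : PostHopf R H) {x y : H} {ι κ : Type*}
    (ρx : Coalgebra.Repr R x ι) (ρy : Coalgebra.Repr R y κ) (z : H) :
    subProd R H P.rhd (subProd R H P.rhd (x ⊗ₜ y) ⊗ₜ z)
      = ∑ i ∈ ρx.index, ∑ j ∈ ρy.index, subProd R H P.rhd (ρx.left i ⊗ₜ ρy.left j)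
          * P.rhd (subProd R H P.rhd (ρx.right i ⊗ₜ ρy.right j) ⊗ₜ z) := by
  simpa only [P.coe_subProdCoalgHom, Coalgebra.Repr.induced_index, Coalgebra.Repr.induced_left,
    Coalgebra.Repr.induced_right, Coalgebra.Repr.tmul_index, Coalgebra.Repr.tmul_left,
    Coalgebra.Repr.tmul_right, Function.comp_apply, Finset.sum_product]
    using subProd_tmul_eq_sum P.rhd ((ρx.tmul ρy).induced P.subProdCoalgHom) z

end Cocomm

/-- In a cocommutative post-Hopf algebra, the subadjacent product
`x *▷ y = x₁·(x₂ ▷ y)` is associative. -/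
theorem subProd_assoc (P : PostHopf R H) (hcop : _root_.IsCocomm R H) (x y z : H) :
    subProd R H P.rhd (subProd R H P.rhd (x ⊗ₜ y) ⊗ₜ z)
      = subProd R H P.rhd (x ⊗ₜ subProd R H P.rhd (y ⊗ₜ z)) := by
  have : Coalgebra.IsCocomm R H := ⟨LinearMap.ext hcop⟩
  let ρx := ℛ R x
  let ρy := ℛ R y
  calc subProd R H P.rhd (subProd R H P.rhd (x ⊗ₜ y) ⊗ₜ z)
      = ∑ i ∈ ρx.index, ∑ j ∈ ρy.index, subProd R H P.rhd (ρx.left i ⊗ₜ ρy.left j)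
          * P.rhd (ρx.right i ⊗ₜ P.rhd (ρy.right j ⊗ₜ z)) := by
        simp only [P.subProd_subProd_tmul_eq_sum ρx ρy, P.rhd_rhd]
    _ = ∑ j ∈ ρy.index, subProd R H P.rhd (x ⊗ₜ (ρy.left j * P.rhd (ρy.right j ⊗ₜ z))) := by
        rw [Finset.sum_comm]
        simp only [P.subProd_tmul_mul_eq_sum ρx]
    _ = subProd R H P.rhd (x ⊗ₜ subProd R H P.rhd (y ⊗ₜ z)) := by
        rw [subProd_tmul_eq_sum _ ρy, TensorProduct.tmul_sum, map_sum]
end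

section
/- In a cocommutative post-Hopf algebra (H, ▷), the convolution inverse β of the left multiplication map α satisfies β_x = α_{S▷(x)}; equivalently, S▷(x) ▷ y = β_x(y), where S▷ is the subadjacent antipode. -/
/-!
Post-Hopf algebras (Li–Sheng–Tang). We work over a commutative ring `R`.
`Coalgebra.comul (A := H ⊗[R] H)` refers to the standard coalgebra structure
on the tensor product, so that `comul_rhd`/`counit_rhd` say exactly that
`▷ : H ⊗ H → H` is a coalgebra homomorphism.  Sweedler sums such as
`(x₁ ▷ y)·(x₂ ▷ z)` are expressed by applying suitable linear maps to
`Coalgebra.comul x`.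
-/

open TensorProduct Coalgebra LinearMap HopfAlgebra

variable (R H : Type*) [CommRing R] [Ring H] [HopfAlgebra R H]

/-!
Write `α_x = x ▷ -` and `γ_x = α_{S▷(x)}`. The axiom `x ▷ (y ▷ z) = (x *▷ y) ▷ z` says that
`α` turns the subadjacent product into composition, so `(α * γ)(x) = α_{x₁ *▷ S▷(x₂)}`.
Since `α * β = 1`, `x₁ ▷ S▷(x₂) = x₁ ▷ β_{x₂}(S x₃) = S x`, hence
`x₁ *▷ S▷(x₂) = x₁ · (x₂ ▷ S▷(x₃)) = x₁ · S(x₂) = ε(x) 1`; and `α_1 = id` because `1 ▷ 1` is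
group-like and idempotent. So `γ` is a right convolution inverse of `α`, and the left inverse
`β` of `α` equals it.
-/

variable {R H}

lemma eq_of_convEnd_eq_convUnit {f g h : H →ₗ[R] Module.End R H}
    (hfg : convEnd R H f g = convUnit R H) (hgh : convEnd R H g h = convUnit R H) : f = h :=
  congrArg WithConv.ofConv <|
    left_inv_eq_right_inv (congrArg WithConv.toConv hfg) (congrArg WithConv.toConv hgh)

lemma lift_convEnd (f g : H →ₗ[R] Module.End R H) :
    lift (convEnd R H f g)
      = lift f ∘ₗ (lift g).lTensor H ∘ₗ (TensorProduct.assoc R H H H).toLinearMap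
          ∘ₗ comul.rTensor H := by
  ext x y
  simp only [convEnd, AlgebraTensorModule.curry_apply, curry_apply,
    LinearMap.coe_restrictScalars, lift.tmul, LinearMap.comp_apply, LinearMap.rTensor_tmul]
  induction comul (R := R) x using TensorProduct.induction_on with
  | zero => simp
  | tmul a b => simp
  | add u v hu hv => simp [add_tmul, hu, hv]

lemma lift_convUnit_comp_lTensor_comp_comul (f : H →ₗ[R] H) :
    lift (convUnit R H) ∘ₗ f.lTensor H ∘ₗ comul = f := by
  have hunit : lift (convUnit R H) ∘ₗ f.lTensor H
      = f ∘ₗ (TensorProduct.lid R H).toLinearMap ∘ₗ counit.rTensor H := by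
    ext x y
    simp [convUnit, Module.algebraMap_end_apply]
  rw [← LinearMap.comp_assoc, hunit, LinearMap.comp_assoc, LinearMap.comp_assoc,
    Coalgebra.rTensor_counit_comp_comul]
  ext x
  simp

namespace PostHopf

variable (P : PostHopf R H)

lemma isGroupLikeElem_rhd_one_one : IsGroupLikeElem R (P.rhd (1 ⊗ₜ 1)) where
  counit_eq_one := by simpa using LinearMap.congr_fun P.counit_rhd (1 ⊗ₜ 1)
  comul_eq_tmul_self := by
    simpa [Algebra.TensorProduct.one_def] using LinearMap.congr_fun P.comul_rhd (1 ⊗ₜ 1)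

lemma rhd_one_one : P.rhd (1 ⊗ₜ 1) = 1 := by
  have hidem : P.rhd (1 ⊗ₜ 1) * P.rhd (1 ⊗ₜ 1) = P.rhd (1 ⊗ₜ 1) := by
    simpa [Algebra.TensorProduct.one_def] using (P.rhd_mul 1 1 1).symm
  exact (IsIdempotentElem.iff_eq_one_of_isUnit P.isGroupLikeElem_rhd_one_one.isUnit).mp hidem

lemma rhd_one_rhd_one (y : H) : P.rhd (1 ⊗ₜ P.rhd (1 ⊗ₜ y)) = P.rhd (1 ⊗ₜ y) := by
  rw [P.rhd_rhd]
  simp [subProd, Algebra.TensorProduct.one_def, rhd_one_one]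

lemma one_rhd (y : H) : P.rhd (1 ⊗ₜ y) = y := by
  obtain ⟨β, -, hβ⟩ := P.conv_invertible
  have hinv : ∀ z, β 1 (P.rhd (1 ⊗ₜ z)) = z := fun z ↦ by
    simpa [convEnd, convUnit, Algebra.TensorProduct.one_def, Module.algebraMap_end_apply]
      using LinearMap.congr_fun (LinearMap.congr_fun hβ 1) z
  calc P.rhd (1 ⊗ₜ y) = β 1 (P.rhd (1 ⊗ₜ P.rhd (1 ⊗ₜ y))) := (hinv _).symm
    _ = y := by rw [rhd_one_rhd_one, hinv]

lemma rhd_comp_subProd :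
    (TensorProduct.mk R H H).compr₂ P.rhd ∘ₗ subProd R H P.rhd
      = mul' R (Module.End R H) ∘ₗ map ((TensorProduct.mk R H H).compr₂ P.rhd)
          ((TensorProduct.mk R H H).compr₂ P.rhd) := by
  refine TensorProduct.ext' fun a b ↦ LinearMap.ext fun z ↦ ?_
  exact (P.rhd_rhd a b z).symm

lemma rhd_comp_algebraLinearMap :
    (TensorProduct.mk R H H).compr₂ P.rhd ∘ₗ Algebra.linearMap R H
      = Algebra.linearMap R (Module.End R H) := by
  ext y
  simp [one_rhd]

variable {β : H →ₗ[R] Module.End R H}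

lemma rhd_comp_lTensor_subAntipode_comp_comul
    (hβ : convEnd R H ((TensorProduct.mk R H H).compr₂ P.rhd) β = convUnit R H) :
    P.rhd ∘ₗ (subAntipode R H β).lTensor H ∘ₗ comul = antipode R := by
  have hS : lift (β.compl₂ (antipode R)) = lift β ∘ₗ (antipode R).lTensor H :=
    TensorProduct.ext' fun _ _ ↦ rfl
  calc P.rhd ∘ₗ (subAntipode R H β).lTensor H ∘ₗ comul
      = lift (convEnd R H ((TensorProduct.mk R H H).compr₂ P.rhd) β) ∘ₗ
          (antipode R).lTensor H ∘ₗ comul := by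
        rw [lift_convEnd, lift_mk_compr₂, subAntipode, hS]
        simp only [coassoc_simps]
    _ = antipode R := by rw [hβ, lift_convUnit_comp_lTensor_comp_comul]

lemma subProd_comp_lTensor_subAntipode_comp_comul
    (hβ : convEnd R H ((TensorProduct.mk R H H).compr₂ P.rhd) β = convUnit R H) :
    subProd R H P.rhd ∘ₗ (subAntipode R H β).lTensor H ∘ₗ comul
      = Algebra.linearMap R H ∘ₗ counit := by
  calc subProd R H P.rhd ∘ₗ (subAntipode R H β).lTensor H ∘ₗ comul
      = mul' R H ∘ₗ (P.rhd ∘ₗ (subAntipode R H β).lTensor H ∘ₗ comul).lTensor H ∘ₗ comul := by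
        simp only [subProd, coassoc_simps]
    _ = Algebra.linearMap R H ∘ₗ counit := by
        rw [P.rhd_comp_lTensor_subAntipode_comp_comul hβ, HopfAlgebra.mul_antipode_lTensor_comul]

lemma convEnd_rhd_comp_subAntipode
    (hβ : convEnd R H ((TensorProduct.mk R H H).compr₂ P.rhd) β = convUnit R H) :
    convEnd R H ((TensorProduct.mk R H H).compr₂ P.rhd)
      ((TensorProduct.mk R H H).compr₂ P.rhd ∘ₗ subAntipode R H β) = convUnit R H := by
  calc convEnd R H ((TensorProduct.mk R H H).compr₂ P.rhd)
        ((TensorProduct.mk R H H).compr₂ P.rhd ∘ₗ subAntipode R H β)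
      = (TensorProduct.mk R H H).compr₂ P.rhd ∘ₗ
          (subProd R H P.rhd ∘ₗ (subAntipode R H β).lTensor H ∘ₗ comul) := by
        rw [← LinearMap.comp_assoc, rhd_comp_subProd, convEnd]
        simp only [coassoc_simps]
    _ = convUnit R H := by
        rw [P.subProd_comp_lTensor_subAntipode_comp_comul hβ, ← LinearMap.comp_assoc,
          rhd_comp_algebraLinearMap, convUnit]

end PostHopf

theorem convInv_eq_rhd_subAntipode_general (P : PostHopf R H)
    (β : H →ₗ[R] Module.End R H)
    (hβ₁ : convEnd R H ((TensorProduct.mk R H H).compr₂ P.rhd) β = convUnit R H)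
    (hβ₂ : convEnd R H β ((TensorProduct.mk R H H).compr₂ P.rhd) = convUnit R H)
    (x y : H) :
    β x y = P.rhd (subAntipode R H β x ⊗ₜ y) := by
  have hβ_eq := eq_of_convEnd_eq_convUnit hβ₂ (P.convEnd_rhd_comp_subAntipode hβ₁)
  exact LinearMap.congr_fun (LinearMap.congr_fun hβ_eq x) y

/-- In a cocommutative post-Hopf algebra, the convolution inverse `β` of the
left multiplication `α` satisfies `β_x = α_{S▷(x)}`, i.e.
`β_x(y) = S▷(x) ▷ y`. -/
theorem convInv_eq_rhd_subAntipode (P : PostHopf R H) (hcop : _root_.IsCocomm R H)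
    (β : H →ₗ[R] Module.End R H)
    (hβ₁ : convEnd R H ((TensorProduct.mk R H H).compr₂ P.rhd) β = convUnit R H)
    (hβ₂ : convEnd R H β ((TensorProduct.mk R H H).compr₂ P.rhd) = convUnit R H)
    (x y : H) :
    β x y = P.rhd (subAntipode R H β x ⊗ₜ y) :=
  convInv_eq_rhd_subAntipode_general P β hβ₁ hβ₂ x y
end

section
/- Let (H, ▷) be a cocommutative post-Hopf algebra. Then the Hopf algebras (H, ·, 1, Δ, ε, S) and (H, *▷, 1, Δ, ε, S▷) form a Hopf brace, i.e., x *▷ (y·z) = (x₁ *▷ y)·S(x₂)·(x₃ *▷ z) for all x, y, z ∈ H. -/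
/-!
Post-Hopf algebras (Li–Sheng–Tang). We work over a commutative ring `R`.
`Coalgebra.comul (A := H ⊗[R] H)` refers to the standard coalgebra structure
on the tensor product, so that `comul_rhd`/`counit_rhd` say exactly that
`▷ : H ⊗ H → H` is a coalgebra homomorphism.  Sweedler sums such as
`(x₁ ▷ y)·(x₂ ▷ z)` are expressed by applying suitable linear maps to
`Coalgebra.comul x`.
-/

open TensorProduct Coalgebra LinearMap HopfAlgebra

variable (R H : Type*) [CommRing R] [Ring H] [HopfAlgebra R H]

/-!
Everything takes place in the convolution algebra of linear maps `H → H`. Writing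
`a = (- ▷ y)` and `b = (- ▷ z)`, the map `x ↦ x *▷ y` is `id ⋆ a`, so the right-hand side is
`(id ⋆ a) ⋆ S ⋆ (id ⋆ b)`. Since `S ⋆ id` is the convolution unit this collapses to
`id ⋆ a ⋆ b`, and `a ⋆ b = (- ▷ y·z)` is the axiom `x ▷ (y·z) = (x₁ ▷ y)·(x₂ ▷ z)`.
-/

open WithConv

theorem LinearMap.convMul_convMul_apply {K C A : Type*} [CommSemiring K]
    [NonUnitalNonAssocSemiring A] [Module K A] [SMulCommClass K A A] [IsScalarTower K A A]
    [AddCommMonoid C] [Module K C] [CoalgebraStruct K C] (f g h : C →ₗ[K] A) (c : C) :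
    mul' K A (map (mul' K A ∘ₗ map f g) h (map comul LinearMap.id (comul c)))
      = (toConv f * toConv g * toConv h) c := by
  rw [convMul_apply, ofConv_toConv, LinearMap.convMul_def, ofConv_toConv,
    ← LinearMap.comp_apply (map _ _), ← map_comp, LinearMap.comp_id, LinearMap.comp_assoc]

theorem toConv_subProd_comp_flip_mk (rhd : H ⊗[R] H →ₗ[R] H) (y : H) :
    toConv (subProd R H rhd ∘ₗ (TensorProduct.mk R H H).flip y)
      = toConv LinearMap.id * toConv (rhd ∘ₗ (TensorProduct.mk R H H).flip y) := by
  ext x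
  simp only [subProd, LinearMap.comp_apply, flip_apply, mk_apply, map_tmul, convMul_apply]
  induction comul (R := R) x with
  | zero => simp
  | tmul a b => simp
  | add p q hp hq => simp only [add_tmul, map_add, hp, hq]

theorem PostHopf.toConv_rhd_comp_flip_mk_mul (P : PostHopf R H) (y z : H) :
    toConv (P.rhd ∘ₗ (TensorProduct.mk R H H).flip (y * z))
      = toConv (P.rhd ∘ₗ (TensorProduct.mk R H H).flip y) *
          toConv (P.rhd ∘ₗ (TensorProduct.mk R H H).flip z) := by
  ext x
  exact P.rhd_mul x y z

theorem LinearMap.mul_antipode_mul_id_mul {K A : Type*} [CommSemiring K] [Semiring A]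
    [HopfAlgebra K A] (f g : WithConv (A →ₗ[K] A)) :
    f * toConv (antipode K) * (toConv LinearMap.id * g) = f * g := by
  rw [mul_assoc, ← mul_assoc (toConv (antipode K)), antipode_mul_id, one_mul]

theorem subadjacent_hopf_brace (P : PostHopf R H)
    (x y z : H) :
    subProd R H P.rhd (x ⊗ₜ (y * z))
      = LinearMap.mul' R H
          (TensorProduct.map
            (LinearMap.mul' R H ∘ₗ TensorProduct.map
              (subProd R H P.rhd ∘ₗ (TensorProduct.mk R H H).flip y)
              (HopfAlgebra.antipode (R := R) (A := H)))
            (subProd R H P.rhd ∘ₗ (TensorProduct.mk R H H).flip z)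
            (TensorProduct.map Coalgebra.comul LinearMap.id
              (Coalgebra.comul x))) := by
  rw [convMul_convMul_apply, toConv_subProd_comp_flip_mk, toConv_subProd_comp_flip_mk,
    mul_antipode_mul_id_mul, mul_assoc, ← P.toConv_rhd_comp_flip_mk_mul,
    ← toConv_subProd_comp_flip_mk]
  rfl
end

section
/- Let T : K → H be a relative Rota-Baxter operator with respect to a left H-module bialgebra (K, ⇀). Then a ▷_T b := T(a) ⇀ b defines a post-Hopf algebra structure on K. -/
/-!
Post-Hopf algebras (Li–Sheng–Tang). We work over a commutative ring `R`.
`Coalgebra.comul (A := H ⊗[R] H)` refers to the standard coalgebra structure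
on the tensor product, so that `comul_rhd`/`counit_rhd` say exactly that
`▷ : H ⊗ H → H` is a coalgebra homomorphism.  Sweedler sums such as
`(x₁ ▷ y)·(x₂ ▷ z)` are expressed by applying suitable linear maps to
`Coalgebra.comul x`.
-/

open TensorProduct Coalgebra LinearMap HopfAlgebra

variable (R H : Type*) [CommRing R] [Ring H] [HopfAlgebra R H]

variable (K : Type*) [Ring K] [HopfAlgebra R K]

/-- `K` is a left `H`-module bialgebra via `act`. -/
structure IsModuleBialgebra (act : H ⊗[R] K →ₗ[R] K) : Prop where
  one_act : ∀ a : K, act ((1 : H) ⊗ₜ a) = a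
  mul_act : ∀ (x y : H) (a : K), act ((x * y) ⊗ₜ a) = act (x ⊗ₜ act (y ⊗ₜ a))
  act_mul : ∀ (x : H) (a b : K),
    act (x ⊗ₜ (a * b))
      = LinearMap.mul' R K
          (TensorProduct.map (act ∘ₗ (TensorProduct.mk R H K).flip a)
            (act ∘ₗ (TensorProduct.mk R H K).flip b) (Coalgebra.comul x))
  act_one : ∀ x : H, act (x ⊗ₜ (1 : K)) = Coalgebra.counit (R := R) x • (1 : K)
  comul_act : Coalgebra.comul ∘ₗ act
      = TensorProduct.map act act ∘ₗ (Coalgebra.comul (R := R) (A := H ⊗[R] K))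
  counit_act : Coalgebra.counit ∘ₗ act = (Coalgebra.counit (R := R) (A := H ⊗[R] K))

/-- `T : K → H` is a coalgebra homomorphism. -/
structure IsCoalgHom (T : K →ₗ[R] H) : Prop where
  comul_comp : Coalgebra.comul ∘ₗ T = TensorProduct.map T T ∘ₗ Coalgebra.comul
  counit_comp : Coalgebra.counit ∘ₗ T = (Coalgebra.counit (R := R) (A := K))

/-- The descendent product `a *_T b = a₁·(T(a₂) ⇀ b)` as a linear map. -/
noncomputable def descProd (act : H ⊗[R] K →ₗ[R] K) (T : K →ₗ[R] H) :
    K ⊗[R] K →ₗ[R] K :=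
  LinearMap.mul' R K
    ∘ₗ TensorProduct.map LinearMap.id (act ∘ₗ TensorProduct.map T LinearMap.id)
    ∘ₗ (TensorProduct.assoc R K K K).toLinearMap
    ∘ₗ TensorProduct.map Coalgebra.comul LinearMap.id

/-- The relative Rota–Baxter identity `T(a)·T(b) = T(a₁·(T(a₂) ⇀ b))`. -/
def IsRelRotaBaxter (act : H ⊗[R] K →ₗ[R] K) (T : K →ₗ[R] H) : Prop :=
  ∀ a b : K, T a * T b = T (descProd R H K act T (a ⊗ₜ b))

/-!
`a ▷_T b = T(a) ⇀ b` is the composite of the coalgebra maps `T ⊗ id` and `⇀`, and it distributes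
over products because `⇀` does and `T` preserves `Δ`. The module axiom `(xy) ⇀ c = x ⇀ (y ⇀ c)`
together with the Rota–Baxter identity `T(a)T(b) = T(a *_T b)` gives
`a ▷_T (b ▷_T c) = (a *_T b) ▷_T c`. Finally `a ↦ (a ▷_T -)` is `ρ ∘ T` for the algebra map
`ρ : H → End K` of the action, and `ρ ∘ S_H ∘ T` is its convolution inverse because composing
with `ρ` and `T` carries the convolution identities `id * S_H = S_H * id = 1` over.
-/

namespace IsCoalgHom

variable {R H K} {T : K →ₗ[R] H}

def toCoalgHom (hT : IsCoalgHom R H K T) : K →ₗc[R] H where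
  toLinearMap := T
  counit_comp := hT.counit_comp
  map_comp_comul := hT.comul_comp.symm

end IsCoalgHom

namespace IsModuleBialgebra

variable {R H K} {act : H ⊗[R] K →ₗ[R] K}

def toCoalgHom (hmb : IsModuleBialgebra R H K act) : H ⊗[R] K →ₗc[R] K where
  toLinearMap := act
  counit_comp := hmb.counit_act
  map_comp_comul := hmb.comul_act.symm

def toAlgHom (hmb : IsModuleBialgebra R H K act) : H →ₐ[R] Module.End R K :=
  AlgHom.ofLinearMap ((TensorProduct.mk R H K).compr₂ act)
    (LinearMap.ext hmb.one_act) (fun x y => LinearMap.ext (hmb.mul_act x y))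

lemma act_comp_map_mul {C : Type*} [AddCommMonoid C] [Module R C] [Coalgebra R C]
    (hmb : IsModuleBialgebra R H K act) (f : C →ₗc[R] H) (c : C) (a b : K) :
    (act ∘ₗ map f.toLinearMap LinearMap.id) (c ⊗ₜ (a * b))
      = mul' R K
          (map ((act ∘ₗ map f.toLinearMap LinearMap.id) ∘ₗ (TensorProduct.mk R C K).flip a)
            ((act ∘ₗ map f.toLinearMap LinearMap.id) ∘ₗ (TensorProduct.mk R C K).flip b)
            (comul c)) := by
  rw [comp_apply, map_tmul, id_apply, hmb.act_mul, ← comp_apply comul, ← f.map_comp_comul,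
    comp_apply, map_map]
  rfl

end IsModuleBialgebra

namespace IsRelRotaBaxter

variable {R H K}

lemma act_comp_map_assoc {act : H ⊗[R] K →ₗ[R] K} {T : K →ₗ[R] H}
    (hrb : IsRelRotaBaxter R H K act T) (hmb : IsModuleBialgebra R H K act) (a b c : K) :
    (act ∘ₗ map T LinearMap.id) (a ⊗ₜ (act ∘ₗ map T LinearMap.id) (b ⊗ₜ c))
      = (act ∘ₗ map T LinearMap.id) (descProd R H K act T (a ⊗ₜ b) ⊗ₜ c) := by
  simp only [comp_apply, map_tmul, id_apply]
  rw [← hmb.mul_act, hrb]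

end IsRelRotaBaxter

section Convolution

open WithConv

variable {S C B A : Type*} [CommSemiring S] [AddCommMonoid C] [Module S C] [Coalgebra S C]
  [Semiring A] [Algebra S A]

lemma LinearMap.algHom_comp_convMul_comp_coalgHom [Semiring B] [Algebra S B] [Coalgebra S B]
    (ρ : B →ₐ[S] A) (f : C →ₗc[S] B) (φ ψ : WithConv (B →ₗ[S] B)) :
    toConv (ρ.toLinearMap ∘ₗ (φ * ψ).ofConv ∘ₗ f.toLinearMap)
      = toConv (ρ.toLinearMap ∘ₗ φ.ofConv ∘ₗ f.toLinearMap)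
        * toConv (ρ.toLinearMap ∘ₗ ψ.ofConv ∘ₗ f.toLinearMap) := by
  rw [← LinearMap.comp_assoc, LinearMap.algHom_comp_convMul_distrib,
    LinearMap.convMul_comp_coalgHom_distrib]
  rfl

lemma LinearMap.algHom_comp_convOne_comp_coalgHom [Semiring B] [Bialgebra S B]
    (ρ : B →ₐ[S] A) (f : C →ₗc[S] B) :
    toConv (ρ.toLinearMap ∘ₗ (1 : WithConv (B →ₗ[S] B)).ofConv ∘ₗ f.toLinearMap) = 1 := by
  ext c
  simp

variable [Semiring B] [HopfAlgebra S B] (ρ : B →ₐ[S] A) (f : C →ₗc[S] B)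

lemma LinearMap.algHom_comp_coalgHom_mul_antipode :
    toConv (ρ.toLinearMap ∘ₗ f.toLinearMap)
      * toConv (ρ.toLinearMap ∘ₗ HopfAlgebra.antipode S ∘ₗ f.toLinearMap) = 1 := by
  rw [← LinearMap.algHom_comp_convOne_comp_coalgHom ρ f, ← LinearMap.id_mul_antipode,
    LinearMap.algHom_comp_convMul_comp_coalgHom]
  rfl

lemma LinearMap.antipode_mul_algHom_comp_coalgHom :
    toConv (ρ.toLinearMap ∘ₗ HopfAlgebra.antipode S ∘ₗ f.toLinearMap)
      * toConv (ρ.toLinearMap ∘ₗ f.toLinearMap) = 1 := by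
  rw [← LinearMap.algHom_comp_convOne_comp_coalgHom ρ f, ← LinearMap.antipode_mul_id,
    LinearMap.algHom_comp_convMul_comp_coalgHom]
  rfl

end Convolution

/-- A relative Rota–Baxter operator `T : K → H` with respect to a left
`H`-module bialgebra `(K, ⇀)` induces a post-Hopf algebra structure
`a ▷_T b = T(a) ⇀ b` on `K`. -/
theorem relRotaBaxter_to_postHopf (act : H ⊗[R] K →ₗ[R] K) (T : K →ₗ[R] H)
    (hmb : IsModuleBialgebra R H K act) (hT : IsCoalgHom R H K T)
    (hrb : IsRelRotaBaxter R H K act T) :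
    ∃ P : PostHopf R K, P.rhd = act ∘ₗ TensorProduct.map T LinearMap.id := by
  let rhd : K ⊗[R] K →ₗc[R] K :=
    hmb.toCoalgHom.comp (Coalgebra.TensorProduct.map hT.toCoalgHom (CoalgHom.id R K))
  refine ⟨{ rhd := act ∘ₗ TensorProduct.map T LinearMap.id
            comul_rhd := rhd.map_comp_comul.symm
            counit_rhd := rhd.counit_comp
            rhd_mul := hmb.act_comp_map_mul hT.toCoalgHom
            rhd_rhd := hrb.act_comp_map_assoc hmb
            conv_invertible := ⟨hmb.toAlgHom.toLinearMap ∘ₗ HopfAlgebra.antipode R ∘ₗ T,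
              congrArg WithConv.ofConv
                (LinearMap.algHom_comp_coalgHom_mul_antipode hmb.toAlgHom hT.toCoalgHom),
              congrArg WithConv.ofConv
                (LinearMap.antipode_mul_algHom_comp_coalgHom hmb.toAlgHom hT.toCoalgHom)⟩ }, rfl⟩
end
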